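/- Let 𝒞 = ⋃_{k=1}^ℓ B̄(y_k, s) be a nondegenerate geometric complex in ℝ^d and let 0 < r < R. Then ∫_{B(0,R−r)} 𝒩(𝒞, B(x, r)) / Vol(B(0,r)) dx ≤ 𝒩(𝒞, B(0,R)) ≤ ∫_{B(0,R+r)} 𝒩*(𝒞, B(x, r)) / Vol(B(0,r)) dx, where 𝒩 and 𝒩* count all connected components (with no restriction on homotopy type) and the integrals are with respect to Lebesgue measure in x. -/

import Mathlib

open Metric MeasureTheory Filter Topology

noncomputable section

/-- Euclidean space `ℝ^d`. -/
abbrev Euc (d : ℕ) := EuclideanSpace ℝ (Fin d)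

/-- `C` is a connected component of `Y` (with the subspace topology), viewed as a
subset of the ambient space. -/
def IsCompOf {d : ℕ} (Y C : Set (Euc d)) : Prop :=
  ∃ x ∈ Y, C = connectedComponentIn Y x

/-- The number of connected components of `Y₁` contained in the interior of `Y₂`. -/
noncomputable def compCount {d : ℕ} (Y₁ Y₂ : Set (Euc d)) : ℕ :=
  {C : Set (Euc d) | IsCompOf Y₁ C ∧ C ⊆ interior Y₂}.ncard

/-- The number of connected components of `Y₁` contained in the interior of `Y₂`
and homotopy equivalent to `Z`. -/
noncomputable def compCountType {d : ℕ} (Y₁ Y₂ : Set (Euc d))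
    (Z : Type*) [TopologicalSpace Z] : ℕ :=
  {C : Set (Euc d) | IsCompOf Y₁ C ∧ C ⊆ interior Y₂ ∧
    Nonempty (ContinuousMap.HomotopyEquiv C Z)}.ncard

/-- The number of connected components of `Y₁` intersecting `Y₂`
and homotopy equivalent to `Z`. -/
noncomputable def compCountTypeStar {d : ℕ} (Y₁ Y₂ : Set (Euc d))
    (Z : Type*) [TopologicalSpace Z] : ℕ :=
  {C : Set (Euc d) | IsCompOf Y₁ C ∧ (C ∩ Y₂).Nonempty ∧
    Nonempty (ContinuousMap.HomotopyEquiv C Z)}.ncard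

/-- The number of connected components of `Y₁` intersecting `Y₂`. -/
noncomputable def compCountStar {d : ℕ} (Y₁ Y₂ : Set (Euc d)) : ℕ :=
  {C : Set (Euc d) | IsCompOf Y₁ C ∧ (C ∩ Y₂).Nonempty}.ncard

/-- A geometric complex in `ℝ^d`: a finite union of closed balls of a common radius. -/
def IsGeomComplex {d : ℕ} (Z : Set (Euc d)) : Prop :=
  ∃ (ℓ : ℕ) (y : Fin ℓ → Euc d) (r : ℝ), 0 < r ∧ Z = ⋃ k, closedBall (y k) r

/-- Nondegeneracy of the family of closed balls of radius `s` centered at `y 1, …, y ℓ`. -/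
def Nondeg {d ℓ : ℕ} (y : Fin ℓ → Euc d) (s : ℝ) : Prop :=
  ∀ J : Finset (Fin ℓ), J.Nonempty → ∀ x : Euc d,
    (∀ j ∈ J, dist x (y j) = s) →
      LinearIndependent ℝ (fun j : J => x - y (j : Fin ℓ))

/-- A nondegenerate geometric complex in `ℝ^d`. -/
def IsNondegGeomComplex {d : ℕ} (Z : Set (Euc d)) : Prop :=
  ∃ (ℓ : ℕ) (y : Fin ℓ → Euc d) (r : ℝ), 0 < r ∧ Z = ⋃ k, closedBall (y k) r ∧ Nondeg y r

/-- A unit-intensity Poisson point process on `ℝ^d`, defined on the probability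
space `(Ω, ℙ)`. -/
structure PoissonPP (d : ℕ) {Ω : Type*} [MeasurableSpace Ω] (ℙ : Measure Ω) where
  /-- the random set of points -/
  pts : Ω → Set (Euc d)
  /-- the point set is locally finite -/
  locFin : ∀ ω : Ω, ∀ s : Set (Euc d), Bornology.IsBounded s → (pts ω ∩ s).Finite
  /-- the number of points in a finite-volume Borel set is Poisson distributed with
  mean the volume of the set -/
  poisson : ∀ A : Set (Euc d), MeasurableSet A → volume A ≠ ⊤ → ∀ k : ℕ,
    ℙ {ω | (pts ω ∩ A).ncard = k} =
      ENNReal.ofReal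
        (Real.exp (-(volume A).toReal) * (volume A).toReal ^ k / (Nat.factorial k))
  /-- the numbers of points in finitely many pairwise disjoint Borel sets are independent -/
  indep : ∀ (n : ℕ) (A : Fin n → Set (Euc d)), (∀ i, MeasurableSet (A i)) →
    (∀ i, volume (A i) ≠ ⊤) → Pairwise (Function.onFun Disjoint A) →
    ProbabilityTheory.iIndepFun
      (fun i ω => ((pts ω ∩ A i).ncard : ℕ)) ℙ

/-- The closed `α`-neighborhood of a point set `P`: the union of closed balls of
radius `α` centered at the points of `P`. -/
def nbhd {d : ℕ} (P : Set (Euc d)) (α : ℝ) : Set (Euc d) := ⋃ p ∈ P, closedBall p α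

end

/-!
Integrating the number of components over the centre `x` swaps sum and integral:
`∫_A 𝒩(Y, B(x, r)) dx = ∑_C Vol {x ∈ A | C ⊆ B(x, r)}`, a sum over the components `C` of
`Y`, which are finitely many because each contains one of the balls. For `A = B(0, R - r)`
the summand lies in `B(p, r)` for any `p ∈ C` and is empty unless `C ⊆ B(0, R)`.
Symmetrically, for `A = B(0, R + r)` and `𝒩*`, the summand is `A ∩ (r-thickening of C)`,
which contains `B(p, r)` whenever `C ⊆ B(0, R)`.
-/

open Set Finset

section Counting

open Classical in
theorem setIntegral_card_filter_mem {α β : Type*} [MeasurableSpace α] {μ : Measure α}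
    (F : Finset β) {T : β → Set α} (hT : ∀ b ∈ F, MeasurableSet (T b)) {A : Set α}
    (hA : μ A ≠ ⊤) :
    ∫ x in A, (#{b ∈ F | x ∈ T b} : ℝ) ∂μ = ∑ b ∈ F, μ.real (T b ∩ A) := by
  have hcard : ∀ x,
      (#{b ∈ F | x ∈ T b} : ℝ) = ∑ b ∈ F, (T b).indicator (fun _ => (1 : ℝ)) x :=
    fun x => by simp only [natCast_card_filter, indicator_apply]
  simp_rw [hcard]
  rw [integral_finsetSum F (f := fun b => (T b).indicator fun _ => (1 : ℝ))
    fun b hb => (integrableOn_const hA).indicator (hT b hb)]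
  refine sum_congr rfl fun b hb => ?_
  rw [integral_indicator_const _ (hT b hb), measureReal_restrict_apply (hT b hb), smul_eq_mul,
    mul_one]

end Counting

section MetricBalls

variable {X : Type*} [PseudoMetricSpace X]

theorem IsCompact.isOpen_setOf_subset_ball {C : Set X} (hC : IsCompact C) (r : ℝ) :
    IsOpen {x | C ⊆ ball x r} := by
  rcases C.eq_empty_or_nonempty with rfl | hne
  · simp
  refine Metric.isOpen_iff.2 fun x hx => ?_
  obtain ⟨q, hq, hmax⟩ :=
    hC.exists_isMaxOn hne (continuous_const.dist continuous_id).continuousOn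
  refine ⟨r - dist x q, sub_pos.2 (mem_ball_comm.1 (hx hq)), fun x' hx' c hc => ?_⟩
  have : dist x c ≤ dist x q := hmax hc
  rw [mem_ball] at hx' ⊢
  linarith [dist_triangle c x x', dist_comm c x, dist_comm x x']

theorem setOf_inter_ball_nonempty_eq_thickening (C : Set X) (r : ℝ) :
    {x | (C ∩ ball x r).Nonempty} = thickening r C := by
  ext x
  simp [mem_thickening_iff, Set.Nonempty, dist_comm]

end MetricBalls

section HaarBalls

variable {E : Type*} [NormedAddCommGroup E] [ProperSpace E] [MeasurableSpace E] [BorelSpace E]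

variable (μ : Measure E) [μ.IsAddHaarMeasure]

open Classical in
theorem measureReal_setOf_subset_ball_inter_ball_le {C : Set E} (hC : C.Nonempty) (z : E)
    (r R : ℝ) :
    μ.real ({x | C ⊆ ball x r} ∩ ball z (R - r)) ≤
      if C ⊆ ball z R then μ.real (ball (0 : E) r) else 0 := by
  split_ifs with hCR
  · obtain ⟨p, hp⟩ := hC
    calc μ.real ({x | C ⊆ ball x r} ∩ ball z (R - r)) ≤ μ.real (ball p r) :=
          measureReal_mono fun x hx => mem_ball_comm.1 (hx.1 hp)
      _ = μ.real (ball 0 r) := Measure.addHaar_real_ball_center μ p r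
  · suffices {x | C ⊆ ball x r} ∩ ball z (R - r) = ∅ by simp [this]
    refine eq_empty_of_forall_notMem fun x ⟨hCx, hxz⟩ => hCR (hCx.trans (ball_subset_ball' ?_))
    rw [mem_ball] at hxz
    linarith

theorem measureReal_ball_le_thickening_inter_ball {C : Set E} (hC : C.Nonempty) {z : E}
    {r R : ℝ} (hCR : C ⊆ ball z R) :
    μ.real (ball (0 : E) r) ≤ μ.real (thickening r C ∩ ball z (R + r)) := by
  obtain ⟨p, hp⟩ := hC
  rw [← Measure.addHaar_real_ball_center μ p r]
  refine measureReal_mono (fun x hx => ⟨mem_thickening_iff.2 ⟨p, hp, hx⟩, ?_⟩)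
    (measure_ne_top_of_subset inter_subset_right measure_ball_lt_top.ne)
  refine ball_subset_ball' ?_ hx
  have := mem_ball.1 (hCR hp)
  linarith

end HaarBalls

section Components

variable {d : ℕ} {Y C : Set (Euc d)}

theorem IsCompOf.nonempty (h : IsCompOf Y C) : C.Nonempty := by
  obtain ⟨x, hx, rfl⟩ := h
  exact ⟨x, mem_connectedComponentIn hx⟩

theorem IsCompOf.isCompact (hY : IsCompact Y) (h : IsCompOf Y C) : IsCompact C := by
  obtain ⟨x, hx, rfl⟩ := h
  have : CompactSpace Y := isCompact_iff_compactSpace.mp hY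
  rw [connectedComponentIn_eq_image hx]
  exact isClosed_connectedComponent.isCompact.image continuous_subtype_val

theorem finite_setOf_isCompOf_iUnion {ι : Type*} [Finite ι] {S : ι → Set (Euc d)}
    (hS : ∀ i, IsPreconnected (S i)) : {C | IsCompOf (⋃ i, S i) C}.Finite := by
  refine (finite_iUnion fun i => Set.Subsingleton.finite (s :=
    connectedComponentIn (⋃ i, S i) '' S i) ?_).subset ?_
  · rintro _ ⟨x, hx, rfl⟩ _ ⟨x', hx', rfl⟩
    exact connectedComponentIn_eq
      ((hS i).subset_connectedComponentIn hx (subset_iUnion S i) hx')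
  · rintro _ ⟨x, hx, rfl⟩
    obtain ⟨i, hi⟩ := mem_iUnion.1 hx
    exact mem_iUnion.2 ⟨i, x, hi, rfl⟩

open Classical in
theorem compCount_eq_card_filter (hF : {C | IsCompOf Y C}.Finite) (U : Set (Euc d)) :
    compCount Y U = #{C ∈ hF.toFinset | C ⊆ interior U} := by
  rw [compCount, ← ncard_coe_finset]
  congr 1
  ext C
  simp

open Classical in
theorem compCountStar_eq_card_filter (hF : {C | IsCompOf Y C}.Finite) (U : Set (Euc d)) :
    compCountStar Y U = #{C ∈ hF.toFinset | (C ∩ U).Nonempty} := by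
  rw [compCountStar, ← ncard_coe_finset]
  congr 1
  ext C
  simp

end Components

section Sandwich

variable {d : ℕ} {Y : Set (Euc d)}

theorem setIntegral_compCount_ball_le (hY : IsCompact Y) (hF : {C | IsCompOf Y C}.Finite)
    (r R : ℝ) :
    ∫ x in ball (0 : Euc d) (R - r), (compCount Y (ball x r) : ℝ) ≤
      compCount Y (ball (0 : Euc d) R) * volume.real (ball (0 : Euc d) r) := by
  classical
  have hF' : ∀ C ∈ hF.toFinset, IsCompOf Y C := fun C hC => hF.mem_toFinset.1 hC
  simp_rw [compCount_eq_card_filter hF, isOpen_ball.interior_eq]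
  refine (setIntegral_card_filter_mem (T := fun C => {x | C ⊆ ball x r}) hF.toFinset
    (fun C hC => ((hF' C hC).isCompact hY).isOpen_setOf_subset_ball r |>.measurableSet)
    measure_ball_lt_top.ne).trans_le ?_
  calc _ ≤ ∑ C ∈ hF.toFinset,
        if C ⊆ ball 0 R then volume.real (ball (0 : Euc d) r) else 0 :=
        sum_le_sum fun C hC =>
          measureReal_setOf_subset_ball_inter_ball_le volume (hF' C hC).nonempty 0 r R
    _ = _ := by rw [← sum_filter, sum_const, nsmul_eq_mul]

theorem le_setIntegral_compCountStar_ball (hF : {C | IsCompOf Y C}.Finite) (r R : ℝ) :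
    compCount Y (ball (0 : Euc d) R) * volume.real (ball (0 : Euc d) r) ≤
      ∫ x in ball (0 : Euc d) (R + r), (compCountStar Y (ball x r) : ℝ) := by
  classical
  have hF' : ∀ C ∈ hF.toFinset, IsCompOf Y C := fun C hC => hF.mem_toFinset.1 hC
  simp_rw [compCount_eq_card_filter hF, compCountStar_eq_card_filter hF,
    isOpen_ball.interior_eq]
  refine le_of_le_of_eq ?_ (setIntegral_card_filter_mem
    (T := fun C => {x | (C ∩ ball x r).Nonempty}) hF.toFinset (fun C _ => by
      simpa only [setOf_inter_ball_nonempty_eq_thickening] using isOpen_thickening.measurableSet)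
    measure_ball_lt_top.ne).symm
  simp only [setOf_inter_ball_nonempty_eq_thickening]
  calc _ = ∑ C ∈ hF.toFinset with C ⊆ ball 0 R, volume.real (ball (0 : Euc d) r) := by
        rw [sum_const, nsmul_eq_mul]
    _ ≤ ∑ C ∈ hF.toFinset with C ⊆ ball 0 R,
          volume.real (thickening r C ∩ ball 0 (R + r)) :=
        sum_le_sum fun C hC => measureReal_ball_le_thickening_inter_ball volume
          (hF' C (mem_filter.1 hC).1).nonempty (mem_filter.1 hC).2
    _ ≤ _ := sum_le_sum_of_subset_of_nonneg (filter_subset _ _) fun _ _ _ => measureReal_nonneg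

end Sandwich

theorem stmt_2_general {d ℓ : ℕ} (y : Fin ℓ → Euc d) (s : ℝ)
    (r R : ℝ) (hr : 0 < r) :
    (∫ x in ball (0 : Euc d) (R - r),
        (compCount (⋃ k, closedBall (y k) s) (ball x r) : ℝ)
          / (volume (ball (0 : Euc d) r)).toReal)
      ≤ (compCount (⋃ k, closedBall (y k) s) (ball (0 : Euc d) R) : ℝ) ∧
    (compCount (⋃ k, closedBall (y k) s) (ball (0 : Euc d) R) : ℝ)
      ≤ ∫ x in ball (0 : Euc d) (R + r),
          (compCountStar (⋃ k, closedBall (y k) s) (ball x r) : ℝ)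
            / (volume (ball (0 : Euc d) r)).toReal := by
  have hY : IsCompact (⋃ k, closedBall (y k) s) :=
    isCompact_iUnion fun k => isCompact_closedBall _ _
  have hF := finite_setOf_isCompOf_iUnion fun k => (convex_closedBall (y k) s).isPreconnected
  have hV : 0 < volume.real (ball (0 : Euc d) r) :=
    ENNReal.toReal_pos (measure_ball_pos volume 0 hr).ne' measure_ball_lt_top.ne
  rw [← measureReal_def, integral_div, integral_div, div_le_iff₀ hV, le_div_iff₀ hV]
  exact ⟨setIntegral_compCount_ball_le hY hF r R, le_setIntegral_compCountStar_ball hF r R⟩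

/-- Integral Geometry Sandwich, all components. -/
theorem stmt_2 {d ℓ : ℕ} (y : Fin ℓ → Euc d) (s : ℝ) (hs : 0 < s)
    (hnd : Nondeg y s)
    (r R : ℝ) (hr : 0 < r) (hrR : r < R) :
    (∫ x in ball (0 : Euc d) (R - r),
        (compCount (⋃ k, closedBall (y k) s) (ball x r) : ℝ)
          / (volume (ball (0 : Euc d) r)).toReal)
      ≤ (compCount (⋃ k, closedBall (y k) s) (ball (0 : Euc d) R) : ℝ) ∧
    (compCount (⋃ k, closedBall (y k) s) (ball (0 : Euc d) R) : ℝ)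
      ≤ ∫ x in ball (0 : Euc d) (R + r),
          (compCountStar (⋃ k, closedBall (y k) s) (ball x r) : ℝ)
            / (volume (ball (0 : Euc d) r)).toReal :=
  stmt_2_general y s r R hr
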